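/- arXiv:1203.0988 — 5 statements merged into one kernel-verified Lean document; each statement's English description precedes it below -/
import Mathlib

section
/- Let E be a pseudo-effect algebra. Then E is weakly commutative (i.e., for all a,b ∈ E, a+b exists iff b+a exists) if and only if for every a ∈ E, the left complement a⁻ equals the right complement a~. -/
/-- A pseudo-effect algebra (PEA): a structure with a partial addition `add`
(with domain of definition `D`), a zero and a one, satisfying (PE1)-(PE4)
together with the (derivable) neutrality of zero. -/
structure PEA (E : Type) where
  /-- `D a b` means that the partial sum `a + b` is defined. -/
  D : E → E → Prop
  /-- The partial addition (its value is relevant only when `D a b` holds). -/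
  add : E → E → E
  zero : E
  one : E
  /-- (PE1), definedness part. -/
  assoc_defined : ∀ a b c, (D a b ∧ D (add a b) c) ↔ (D b c ∧ D a (add b c))
  /-- (PE1), equality part. -/
  assoc_eq : ∀ a b c, D a b → D (add a b) c → add (add a b) c = add a (add b c)
  /-- (PE2), right complement. -/
  compl_right : ∀ a, ∃! d, D a d ∧ add a d = one
  /-- (PE2), left complement. -/
  compl_left : ∀ a, ∃! e, D e a ∧ add e a = one
  /-- (PE3). -/
  pe3 : ∀ a b, D a b →
    (∃ d, D d a ∧ add d a = add a b) ∧ (∃ e, D b e ∧ add b e = add a b)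
  /-- (PE4). -/
  pe4_right : ∀ a, D a one → a = zero
  pe4_left : ∀ a, D one a → a = zero
  D_zero_right : ∀ a, D a zero
  D_zero_left : ∀ a, D zero a
  add_zero : ∀ a, add a zero = a
  zero_add : ∀ a, add zero a = a

namespace PEA

variable {E : Type} (P : PEA E)

/-- The induced partial order: `a ≤ b` iff `a + c = b` for some `c`. -/
def le (a b : E) : Prop := ∃ c, P.D a c ∧ P.add a c = b

/-- The left complement `a⁻`, the unique element with `a⁻ + a = 1`. -/
noncomputable def lneg (a : E) : E := (P.compl_left a).choose

/-- The right complement `a~`, the unique element with `a + a~ = 1`. -/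
noncomputable def rneg (a : E) : E := (P.compl_right a).choose

/-- `E` is weakly commutative if `a + b` is defined iff `b + a` is defined. -/
def WeaklyCommutative : Prop := ∀ a b, P.D a b ↔ P.D b a

/-- `E` is symmetric if the two complements coincide. -/
def Symmetric : Prop := ∀ a, P.lneg a = P.rneg a

/-- A state on a PEA: a `[0,1]`-valued map, additive on existing sums, sending
`0 ↦ 0` and `1 ↦ 1`. -/
def IsState (s : E → ℝ) : Prop :=
  s P.zero = 0 ∧ s P.one = 1 ∧ (∀ a, 0 ≤ s a ∧ s a ≤ 1) ∧
    ∀ a b, P.D a b → s (P.add a b) = s a + s b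

/-- An `(n+1)`-valued discrete state: a state whose range is `{0, 1/n, …, 1}`. -/
def IsDiscreteState (n : ℕ) (s : E → ℝ) : Prop :=
  P.IsState s ∧ Set.range s = {x : ℝ | ∃ i ≤ n, x = (i : ℝ) / n}

/-- An ideal: a nonempty downward closed subset closed under existing sums. -/
def IsIdeal (I : Set E) : Prop :=
  I.Nonempty ∧ (∀ a i, i ∈ I → P.le a i → a ∈ I) ∧
    ∀ i j, i ∈ I → j ∈ I → P.D i j → P.add i j ∈ I

/-- A normal ideal: `a + i = j + a` implies `i ∈ I ↔ j ∈ I`. -/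
def IsNormalIdeal (I : Set E) : Prop :=
  P.IsIdeal I ∧ ∀ a i j, P.D a i → P.D j a → P.add a i = P.add j a → (i ∈ I ↔ j ∈ I)

/-- A maximal ideal: proper and not properly contained in a proper ideal. -/
def IsMaximalIdeal (I : Set E) : Prop :=
  P.IsIdeal I ∧ P.one ∉ I ∧ ∀ J, P.IsIdeal J → P.one ∉ J → I ⊆ J → I = J

/-- `n`-fold partial multiple of an element. -/
def nmul : ℕ → E → E
  | 0, _ => P.zero
  | k + 1, a => P.add (nmul k a) a

/-- Definedness of the `n`-fold partial multiple. -/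
def nmulD : ℕ → E → Prop
  | 0, _ => True
  | k + 1, a => nmulD k a ∧ P.D (P.nmul k a) a

/-- The set of elements of infinite isotropic index. -/
def Infinit : Set E := {a | ∀ k, P.nmulD k a}

/-- An `n`-decomposition of a PEA. -/
def IsNDecomp (n : ℕ) (F : ℕ → Set E) : Prop :=
  (∀ i, i ≤ n → (F i).Nonempty) ∧
  (∀ i j, i ≤ n → j ≤ n → i ≠ j → F i ∩ F j = ∅) ∧
  ((⋃ i ∈ Set.Iic n, F i) = Set.univ) ∧
  (∀ i, i ≤ n → P.lneg '' F i = F (n - i) ∧ P.rneg '' F i = F (n - i)) ∧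
  (∀ i j, i ≤ n → j ≤ n → ∀ x ∈ F i, ∀ y ∈ F j, P.D x y →
     i + j ≤ n ∧ P.add x y ∈ F (i + j))

/-- An `n`-perfect PEA: an `n`-decomposition with all sums `Eᵢ + Eⱼ`, `i+j < n`,
existing, and whose bottom slice is the unique maximal ideal. -/
def IsNPerfect (n : ℕ) (F : ℕ → Set E) : Prop :=
  P.IsNDecomp n F ∧
  (∀ i j, i + j < n → ∀ x ∈ F i, ∀ y ∈ F j, P.D x y) ∧
  (P.IsMaximalIdeal (F 0) ∧ ∀ J, P.IsMaximalIdeal J → J = F 0)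

/-! The sum `a + b` is defined iff `b ≤ a~` iff `a ≤ b⁻`. So if the two complements agree,
both `a + b` and `b + a` are defined exactly when `a ≤ b⁻ = b~`. Conversely, weak
commutativity makes `a + a⁻` and `a~ + a` defined, whence `a⁻ ≤ a~ ≤ a⁻`. -/

lemma rneg_spec (a : E) : P.D a (P.rneg a) ∧ P.add a (P.rneg a) = P.one :=
  (P.compl_right a).choose_spec.1

lemma eq_rneg {a d : E} (h : P.D a d) (hd : P.add a d = P.one) : d = P.rneg a :=
  (P.compl_right a).choose_spec.2 d ⟨h, hd⟩

lemma lneg_spec (a : E) : P.D (P.lneg a) a ∧ P.add (P.lneg a) a = P.one :=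
  (P.compl_left a).choose_spec.1

lemma eq_lneg {a d : E} (h : P.D d a) (hd : P.add d a = P.one) : d = P.lneg a :=
  (P.compl_left a).choose_spec.2 d ⟨h, hd⟩

lemma eq_zero_of_add_eq_left {a x : E} (h : P.D a x) (hx : P.add a x = a) : x = P.zero := by
  have h1 : P.D (P.lneg a) (P.add a x) := by rw [hx]; exact (P.lneg_spec a).1
  have h2 := ((P.assoc_defined (P.lneg a) a x).2 ⟨h, h1⟩).2
  rw [(P.lneg_spec a).2] at h2
  exact P.pe4_left x h2

lemma left_eq_zero_of_add_eq_zero {c d : E} (h : P.D c d) (h0 : P.add c d = P.zero) : c = P.zero :=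
  P.pe4_left c ((P.assoc_defined P.one c d).2 ⟨h, h0 ▸ P.D_zero_right P.one⟩).1

lemma le_antisymm {a b : E} (hab : P.le a b) (hba : P.le b a) : a = b := by
  obtain ⟨c, hac, rfl⟩ := hab
  obtain ⟨d, hd, hsum⟩ := hba
  obtain ⟨hcd, ha⟩ := (P.assoc_defined a c d).1 ⟨hac, hd⟩
  have hc : c = P.zero := by
    refine P.left_eq_zero_of_add_eq_zero hcd (P.eq_zero_of_add_eq_left ha ?_)
    rw [← P.assoc_eq a c d hac hd, hsum]
  rw [hc, P.add_zero]

lemma D_iff_le_rneg {a b : E} : P.D a b ↔ P.le b (P.rneg a) := by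
  constructor
  · intro hab
    obtain ⟨hc, hc1⟩ := P.rneg_spec (P.add a b)
    obtain ⟨hbc, habc⟩ := (P.assoc_defined a b _).1 ⟨hab, hc⟩
    exact ⟨_, hbc, P.eq_rneg habc (by rw [← P.assoc_eq a b _ hab hc, hc1])⟩
  · rintro ⟨c, hbc, hsum⟩
    exact ((P.assoc_defined a b c).2 ⟨hbc, hsum ▸ (P.rneg_spec a).1⟩).1

lemma D_iff_le_lneg {a b : E} : P.D a b ↔ P.le a (P.lneg b) := by
  constructor
  · intro hab
    obtain ⟨hc, hc1⟩ := P.lneg_spec (P.add a b)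
    obtain ⟨hca, hcab⟩ := (P.assoc_defined _ a b).2 ⟨hab, hc⟩
    have hlneg : P.add (P.lneg (P.add a b)) a = P.lneg b :=
      P.eq_lneg hcab (by rw [P.assoc_eq _ a b hca hcab, hc1])
    -- (PE3) turns the left witness `c + a = b⁻` into a right one `a + e = b⁻`.
    obtain ⟨-, e, hae, hsum⟩ := P.pe3 _ a hca
    exact ⟨e, hae, hsum.trans hlneg⟩
  · rintro ⟨c, hac, hsum⟩
    obtain ⟨⟨d, hda, hd⟩, -⟩ := P.pe3 a c hac
    have hdab : P.D (P.add d a) b := by rw [hd, hsum]; exact (P.lneg_spec b).1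
    exact ((P.assoc_defined d a b).1 ⟨hda, hdab⟩).1

end PEA

/-- A pseudo-effect algebra is weakly commutative iff the left
complement coincides with the right complement for every element. -/
theorem stmt0 {E : Type} (P : PEA E) :
    P.WeaklyCommutative ↔ ∀ a : E, P.lneg a = P.rneg a := by
  constructor
  · intro hwc a
    have hlneg : P.D a (P.lneg a) := (hwc _ _).1 (P.lneg_spec a).1
    have hrneg : P.D (P.rneg a) a := (hwc _ _).1 (P.rneg_spec a).1
    exact P.le_antisymm (P.D_iff_le_rneg.1 hlneg) (P.D_iff_le_lneg.1 hrneg)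
  · intro hsymm a b
    rw [P.D_iff_le_lneg, hsymm, ← P.D_iff_le_rneg]
end

section
/- Let E be a pseudo-effect algebra and s : E → [0,1] a state with |s(E)| = n+1 for some integer n ≥ 1. Then the following are equivalent: (i) s is an (n+1)-valued discrete state, i.e. s(E) = {0, 1/n, 2/n, ..., 1}; (ii) s(E) is a sub-effect algebra of the effect algebra [0,1]; (iii) for any t, u ∈ s(E) with t ≤ u, there exists v ∈ s(E) with t + v = u. -/
/-!
A sub-effect algebra `S` of `[0,1]` is closed under differences: `u - t = 1 - ((1 - u) + t)`.
If `S` is finite, let `α` be its least positive element; for `x ∈ S` the remainder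
`x - ⌊x / α⌋ α` lies in `S` and is smaller than `α`, hence vanishes. So `S` consists of the
multiples of `α` up to `1 = m α`, i.e. `S = {0, 1/m, …, 1}`, and counting gives `m = n`.
Conversely, closure under differences yields `1 - t` from `t ≤ 1` and then
`t + v = 1 - ((1 - t) - v)`.
-/

def IsSubEffectAlgebra (S : Set ℝ) : Prop :=
  (0 : ℝ) ∈ S ∧ (1 : ℝ) ∈ S ∧ (∀ t ∈ S, ∀ v ∈ S, t + v ≤ 1 → t + v ∈ S) ∧ ∀ t ∈ S, 1 - t ∈ S

def discreteValues (n : ℕ) : Set ℝ := {x : ℝ | ∃ i ≤ n, x = (i : ℝ) / n}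

lemma ncard_discreteValues {n : ℕ} (hn : n ≠ 0) : (discreteValues n).ncard = n + 1 := by
  have himage : discreteValues n = (fun i : ℕ => (i : ℝ) / n) '' Set.Iic n := by
    ext x
    simp [discreteValues, eq_comm]
  rw [himage, Set.ncard_image_of_injective _ ?_, Set.ncard_Iic_nat]
  intro i j hij
  simpa [div_left_inj' (Nat.cast_ne_zero.2 hn : (n : ℝ) ≠ 0)] using hij

lemma isSubEffectAlgebra_discreteValues {n : ℕ} (hn : n ≠ 0) :
    IsSubEffectAlgebra (discreteValues n) := by
  have hn' : (n : ℝ) ≠ 0 := Nat.cast_ne_zero.2 hn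
  refine ⟨⟨0, n.zero_le, by simp⟩, ⟨n, le_rfl, (div_self hn').symm⟩, ?_, ?_⟩
  · rintro _ ⟨i, -, rfl⟩ _ ⟨j, -, rfl⟩ hij
    rw [← add_div, div_le_one (by positivity)] at hij
    exact ⟨i + j, by exact_mod_cast hij, by push_cast; ring⟩
  · rintro _ ⟨i, hi, rfl⟩
    refine ⟨n - i, n.sub_le i, ?_⟩
    rw [Nat.cast_sub hi]
    field_simp

namespace IsSubEffectAlgebra

variable {S : Set ℝ}

lemma sub_mem (hS : IsSubEffectAlgebra S) (hS1 : S ⊆ Set.Iic 1) {t u : ℝ} (ht : t ∈ S)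
    (hu : u ∈ S) (htu : t ≤ u) : u - t ∈ S := by
  obtain ⟨-, -, hadd, hcompl⟩ := hS
  have hu1 : u ≤ 1 := hS1 hu
  convert hcompl _ (hadd _ (hcompl u hu) t ht (by linarith)) using 1
  ring

lemma natCast_mul_mem (hS : IsSubEffectAlgebra S) {α : ℝ} (hα : α ∈ S) (hα0 : 0 ≤ α) :
    ∀ k : ℕ, (k : ℝ) * α ≤ 1 → (k : ℝ) * α ∈ S
  | 0, _ => by simpa using hS.1
  | k + 1, hk => by
    push_cast at hk ⊢
    rw [add_one_mul] at hk ⊢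
    exact hS.2.2.1 _ (natCast_mul_mem hS hα hα0 k (by linarith)) α hα hk

lemma exists_eq_natCast_mul (hS : IsSubEffectAlgebra S) (hS01 : S ⊆ Set.Icc 0 1) {α : ℝ}
    (hα : IsLeast {x ∈ S | 0 < x} α) {x : ℝ} (hx : x ∈ S) : ∃ k : ℕ, x = k * α := by
  obtain ⟨⟨hαS, hα0⟩, hαmin⟩ := hα
  obtain ⟨hx0, hx1⟩ := hS01 hx
  set k := ⌊x / α⌋₊
  have hkx : (k : ℝ) * α ≤ x := (le_div_iff₀ hα0).1 (Nat.floor_le (div_nonneg hx0 hα0.le))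
  have hrem : x - k * α < α := by
    have := (div_lt_iff₀ hα0).1 (Nat.lt_floor_add_one (x / α))
    linarith
  have hkS : (k : ℝ) * α ∈ S := hS.natCast_mul_mem hαS hα0.le k (hkx.trans hx1)
  refine ⟨k, by_contra fun hne => ?_⟩
  have hremS : x - k * α ∈ S := hS.sub_mem (hS01.trans Set.Icc_subset_Iic_self) hkS hx hkx
  have := hαmin ⟨hremS, sub_pos.2 (lt_of_le_of_ne hkx (Ne.symm hne))⟩
  linarith

lemma exists_eq_discreteValues (hS : IsSubEffectAlgebra S) (hS01 : S ⊆ Set.Icc 0 1)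
    (hfin : S.Finite) : ∃ m ≠ 0, S = discreteValues m := by
  have hposfin : {x ∈ S | 0 < x}.Finite := hfin.subset (Set.sep_subset _ _)
  have hα : IsLeast {x ∈ S | 0 < x} (sInf {x ∈ S | 0 < x}) :=
    ⟨Set.Nonempty.csInf_mem ⟨1, hS.2.1, one_pos⟩ hposfin,
      fun y hy => csInf_le hposfin.bddBelow hy⟩
  set α := sInf {x ∈ S | 0 < x}
  have hα0 : 0 < α := hα.1.2
  obtain ⟨m, hm⟩ := hS.exists_eq_natCast_mul hS01 hα hS.2.1
  have hm0 : (m : ℝ) ≠ 0 := by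
    rintro h
    simp [h] at hm
  refine ⟨m, by exact_mod_cast hm0, Set.Subset.antisymm ?_ ?_⟩
  · intro x hx
    obtain ⟨k, rfl⟩ := hS.exists_eq_natCast_mul hS01 hα hx
    have hkm : (k : ℝ) * α ≤ m * α := hm ▸ (hS01 hx).2
    refine ⟨k, by exact_mod_cast le_of_mul_le_mul_right hkm hα0, ?_⟩
    rw [eq_div_iff hm0]
    linear_combination (-(k : ℝ)) * hm
  · rintro _ ⟨i, hi, rfl⟩
    have hiα : (i : ℝ) / m = i * α := by
      rw [div_eq_iff hm0]
      linear_combination (i : ℝ) * hm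
    have hi1 : (i : ℝ) * α ≤ 1 := hm ▸ mul_le_mul_of_nonneg_right (by exact_mod_cast hi) hα0.le
    rw [hiα]
    exact hS.natCast_mul_mem hα.1.1 hα0.le i hi1

lemma eq_discreteValues (hS : IsSubEffectAlgebra S) (hS01 : S ⊆ Set.Icc 0 1) {n : ℕ}
    (hcard : S.ncard = n + 1) : S = discreteValues n := by
  obtain ⟨m, hm0, rfl⟩ :=
    hS.exists_eq_discreteValues hS01 (Set.finite_of_ncard_ne_zero (by omega))
  obtain rfl : m = n := by
    rw [ncard_discreteValues hm0] at hcard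
    omega
  rfl

end IsSubEffectAlgebra

lemma isSubEffectAlgebra_iff_forall_exists_add_eq {S : Set ℝ} (h0 : (0 : ℝ) ∈ S)
    (h1 : (1 : ℝ) ∈ S) (hS1 : S ⊆ Set.Iic 1) :
    IsSubEffectAlgebra S ↔ ∀ t ∈ S, ∀ u ∈ S, t ≤ u → ∃ v ∈ S, t + v = u := by
  refine ⟨fun hS t ht u hu htu => ⟨u - t, hS.sub_mem hS1 ht hu htu, add_sub_cancel t u⟩,
    fun hdiff => ?_⟩
  have hcompl : ∀ t ∈ S, 1 - t ∈ S := fun t ht => by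
    obtain ⟨v, hv, htv⟩ := hdiff t ht 1 h1 (hS1 ht)
    rwa [← eq_sub_of_add_eq' htv]
  refine ⟨h0, h1, fun t ht v hv htv => ?_, hcompl⟩
  obtain ⟨w, hw, hvw⟩ := hdiff v hv (1 - t) (hcompl t ht) (by linarith)
  convert hcompl w hw using 1
  linarith

/-- for a state `s` on a PEA with `|s(E)| = n+1`, the following are
equivalent: (i) `s` is an `(n+1)`-valued discrete state; (ii) `s(E)` is a
sub-effect algebra of `[0,1]`; (iii) `s(E)` is closed under differences of
comparable elements. -/
theorem stmt1 {E : Type} (P : PEA E) (n : ℕ) (hn : 1 ≤ n) (s : E → ℝ)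
    (hs : P.IsState s) (hcard : (Set.range s).ncard = n + 1) :
    (P.IsDiscreteState n s ↔
      ((0 : ℝ) ∈ Set.range s ∧ (1 : ℝ) ∈ Set.range s ∧
        (∀ t ∈ Set.range s, ∀ v ∈ Set.range s, t + v ≤ 1 → t + v ∈ Set.range s) ∧
        (∀ t ∈ Set.range s, 1 - t ∈ Set.range s))) ∧
    (P.IsDiscreteState n s ↔
      (∀ t ∈ Set.range s, ∀ u ∈ Set.range s, t ≤ u →
        ∃ v ∈ Set.range s, t + v = u)) := by
  have hrange : Set.range s ⊆ Set.Icc 0 1 := Set.range_subset_iff.2 hs.2.2.1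
  have hdisc : P.IsDiscreteState n s ↔ IsSubEffectAlgebra (Set.range s) :=
    ⟨fun h => h.2 ▸ isSubEffectAlgebra_discreteValues (by omega),
      fun h => ⟨hs, h.eq_discreteValues hrange hcard⟩⟩
  exact ⟨hdisc, hdisc.trans <| isSubEffectAlgebra_iff_forall_exists_add_eq ⟨_, hs.1⟩ ⟨_, hs.2.1⟩
    (hrange.trans Set.Icc_subset_Iic_self)⟩
end

section
/- Let S be a finite subset of [0,1] with |S| = n+1, containing 0 and 1, such that whenever t, u ∈ S and t ≤ u, u − t ∈ S. Then S = {0, 1/n, 2/n, ..., 1}, i.e., S = {i/n : 0 ≤ i ≤ n}. -/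
/-!
Let `a` be the least positive element of `S`. Subtracting `a` repeatedly from any `x ∈ S` stays
inside `S`, and the remainder `x - ⌊x / a⌋ a ∈ [0, a)` must vanish by minimality of `a`; so `S`
consists of multiples of `a`. In particular `1 = m a`, and subtracting multiples of `a` from `1`
shows that all of `0, a, …, m a` lie in `S`. Hence `S = {k / m : k ≤ m}`, which has `m + 1`
elements, so `m = n`.
-/

def DiffClosed (S : Set ℝ) : Prop :=
  ∀ t ∈ S, ∀ u ∈ S, t ≤ u → u - t ∈ S

namespace DiffClosed

variable {S : Set ℝ}

lemma sub_natCast_mul_mem (hS : DiffClosed S) {a x : ℝ} (ha : a ∈ S) (ha₀ : 0 ≤ a)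
    (hx : x ∈ S) : ∀ k : ℕ, k * a ≤ x → x - k * a ∈ S
  | 0, _ => by simpa using hx
  | k + 1, hk => by
    push_cast at hk
    have hk' : x - k * a ∈ S := hS.sub_natCast_mul_mem ha ha₀ hx k (by nlinarith)
    simpa [add_mul, sub_add_eq_sub_sub] using hS a ha _ hk' (by linarith)

lemma exists_eq_natCast_mul (hS : DiffClosed S) {a x : ℝ} (ha : IsLeast {y ∈ S | 0 < y} a)
    (hx : x ∈ S) (hx₀ : 0 ≤ x) : ∃ k : ℕ, x = k * a := by
  have ha₀ : 0 < a := ha.1.2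
  set k := ⌊x / a⌋₊
  have hle : k * a ≤ x := (le_div_iff₀ ha₀).1 (Nat.floor_le (div_nonneg hx₀ ha₀.le))
  have hlt : x - k * a < a := by
    have := (div_lt_iff₀ ha₀).1 (Nat.lt_floor_add_one (x / a))
    linarith
  refine ⟨k, ?_⟩
  by_contra hne
  have hpos : 0 < x - k * a := lt_of_le_of_ne (by linarith) (fun h => hne (by linarith))
  exact (ha.2 ⟨hS.sub_natCast_mul_mem ha.1.1 ha₀.le hx k hle, hpos⟩).not_gt hlt

lemma eq_image_div (hS : DiffClosed S) (hsub : S ⊆ Set.Icc 0 1) (h1 : (1 : ℝ) ∈ S) {a : ℝ}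
    (ha : IsLeast {y ∈ S | 0 < y} a) {m : ℕ} (hm : 1 = m * a) :
    S = (fun k : ℕ => (k : ℝ) / m) '' Set.Iic m := by
  have ha₀ : 0 < a := ha.1.2
  have hm₀ : (0 : ℝ) < m := pos_of_mul_pos_left (hm ▸ one_pos) ha₀.le
  have hdiv (k : ℕ) : (k : ℝ) / m = k * a := by
    rw [div_eq_iff hm₀.ne', mul_assoc, mul_comm a, ← hm, mul_one]
  ext x
  simp only [Set.mem_image, Set.mem_Iic, hdiv]
  constructor
  · intro hx
    obtain ⟨k, rfl⟩ := hS.exists_eq_natCast_mul ha hx (hsub hx).1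
    have hkm : (k : ℝ) ≤ m := le_of_mul_le_mul_right (hm ▸ (hsub hx).2) ha₀
    exact ⟨k, by exact_mod_cast hkm, rfl⟩
  · rintro ⟨k, hk, rfl⟩
    have hmk : ((m - k : ℕ) : ℝ) * a ≤ 1 := by
      rw [hm]
      gcongr
      exact_mod_cast Nat.sub_le m k
    convert hS.sub_natCast_mul_mem ha.1.1 ha₀.le h1 (m - k) hmk using 1
    rw [Nat.cast_sub hk, hm]
    ring

end DiffClosed

lemma ncard_image_div_Iic {m : ℕ} (hm : m ≠ 0) :
    ((fun k : ℕ => (k : ℝ) / m) '' Set.Iic m).ncard = m + 1 := by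
  rw [Set.ncard_image_of_injective _ (fun i j h => by simpa [hm] using h), Set.ncard_Iic_nat]

theorem stmt2_general (S : Set ℝ) (n : ℕ) (hcard : S.ncard = n + 1)
    (hsub : S ⊆ Set.Icc 0 1) (h1 : (1 : ℝ) ∈ S)
    (hdiff : ∀ t ∈ S, ∀ u ∈ S, t ≤ u → u - t ∈ S) :
    S = {x : ℝ | ∃ i ≤ n, x = (i : ℝ) / n} := by
  have hS : DiffClosed S := hdiff
  have hfin : S.Finite := Set.finite_of_ncard_ne_zero (by omega)
  obtain ⟨a, ha⟩ : ∃ a, IsLeast {y ∈ S | 0 < y} a :=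
    (hfin.sep _).isCompact.exists_isLeast ⟨1, h1, one_pos⟩
  obtain ⟨m, hm⟩ := hS.exists_eq_natCast_mul ha h1 zero_le_one
  have hm₀ : m ≠ 0 := by rintro rfl; simp at hm
  have hSm := hS.eq_image_div hsub h1 ha hm
  obtain rfl : m = n := by
    have := ncard_image_div_Iic hm₀
    rw [← hSm] at this
    omega
  rw [hSm]
  ext x
  simp [eq_comm]

/-- a finite subset of `[0,1]` with `n+1` elements, containing `0`
and `1` and closed under differences of comparable elements, equals
`{i/n : 0 ≤ i ≤ n}`. -/
theorem stmt2 (S : Set ℝ) (n : ℕ) (hn : 1 ≤ n) (hcard : S.ncard = n + 1)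
    (hsub : S ⊆ Set.Icc 0 1) (h0 : (0 : ℝ) ∈ S) (h1 : (1 : ℝ) ∈ S)
    (hdiff : ∀ t ∈ S, ∀ u ∈ S, t ≤ u → u - t ∈ S) :
    S = {x : ℝ | ∃ i ≤ n, x = (i : ℝ) / n} :=
  stmt2_general S n hcard hsub h1 hdiff
end

section
/- Let E be a pseudo-effect algebra and n ≥ 1. Then E admits an (n+1)-valued discrete state if and only if there exist nonempty pairwise disjoint subsets E₀, E₁, ..., Eₙ of E whose union is E, such that (c) Eᵢ⁻ = Eᵢ~ = E_{n−i} for all i, and (d) if x ∈ Eᵢ, y ∈ Eⱼ and x+y exists in E, then i+j ≤ n and x+y ∈ E_{i+j}. -/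
/-! A discrete state `s` and an `n`-decomposition `(Eᵢ)` are two faces of one object: an additive
map `g : E → ℕ` onto `{0, …, n}` with `g 1 = n`. Indeed `s = g / n` and `Eᵢ = g⁻¹ {i}`;
condition (c) is `g a⁻ = g a~ = n - g a`, read off from `a⁻ + a = a + a~ = 1`, and condition (d)
is additivity together with `g ≤ n`. -/

lemma natCast_div_natCast_inj {n i j : ℕ} (hn : n ≠ 0) : (i : ℝ) / n = j / n ↔ i = j := by
  rw [div_left_inj' (Nat.cast_ne_zero.mpr hn), Nat.cast_inj]

namespace PEA

variable {E : Type} (P : PEA E)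

lemma lneg_rneg (a : E) : P.lneg (P.rneg a) = a :=
  ((P.compl_left (P.rneg a)).choose_spec.2 a (P.rneg_spec a)).symm

lemma rneg_lneg (a : E) : P.rneg (P.lneg a) = a :=
  ((P.compl_right (P.lneg a)).choose_spec.2 a (P.lneg_spec a)).symm

lemma lneg_one : P.lneg P.one = P.zero :=
  ((P.compl_left P.one).choose_spec.2 P.zero ⟨P.D_zero_left _, P.zero_add _⟩).symm

lemma image_lneg (A : Set E) : P.lneg '' A = P.rneg ⁻¹' A :=
  congrFun (Set.image_eq_preimage_of_inverse P.rneg_lneg P.lneg_rneg) A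

lemma image_rneg (A : Set E) : P.rneg '' A = P.lneg ⁻¹' A :=
  congrFun (Set.image_eq_preimage_of_inverse P.lneg_rneg P.rneg_lneg) A

lemma map_zero_of_map_add {g : E → ℕ} (hg : ∀ a b, P.D a b → g (P.add a b) = g a + g b) :
    g P.zero = 0 := by
  have h := hg _ _ (P.D_zero_right P.zero)
  rw [P.add_zero] at h
  omega

structure IsNGrading (n : ℕ) (g : E → ℕ) : Prop where
  map_one : g P.one = n
  map_add : ∀ a b, P.D a b → g (P.add a b) = g a + g b
  surj : ∀ i ≤ n, ∃ a, g a = i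

namespace IsNGrading

variable {P} {n : ℕ} {g : E → ℕ}

lemma map_zero (hg : P.IsNGrading n g) : g P.zero = 0 :=
  P.map_zero_of_map_add hg.map_add

lemma map_lneg_add (hg : P.IsNGrading n g) (a : E) : g (P.lneg a) + g a = n := by
  rw [← hg.map_add _ _ (P.lneg_spec a).1, (P.lneg_spec a).2, hg.map_one]

lemma map_add_rneg (hg : P.IsNGrading n g) (a : E) : g a + g (P.rneg a) = n := by
  rw [← hg.map_add _ _ (P.rneg_spec a).1, (P.rneg_spec a).2, hg.map_one]

lemma map_le (hg : P.IsNGrading n g) (a : E) : g a ≤ n := by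
  have := hg.map_add_rneg a
  omega

lemma isNDecomp (hg : P.IsNGrading n g) : P.IsNDecomp n (fun i => g ⁻¹' {i}) := by
  refine ⟨hg.surj, ?_, ?_, fun i hi => ⟨?_, ?_⟩, ?_⟩
  · intro i j _ _ hij
    exact ((Set.disjoint_singleton.2 hij).preimage g).inter_eq
  · exact Set.eq_univ_of_forall fun a => Set.mem_biUnion (hg.map_le a) rfl
  · ext b
    have := hg.map_add_rneg b
    simp only [P.image_lneg, Set.mem_preimage, Set.mem_singleton_iff]
    omega
  · ext b
    have := hg.map_lneg_add b
    simp only [P.image_rneg, Set.mem_preimage, Set.mem_singleton_iff]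
    omega
  · rintro i j - - x rfl y rfl hxy
    exact ⟨hg.map_add x y hxy ▸ hg.map_le _, hg.map_add x y hxy⟩

lemma isDiscreteState (hg : P.IsNGrading n g) (hn : n ≠ 0) :
    P.IsDiscreteState n (fun a => (g a : ℝ) / n) := by
  have hn' : (0 : ℝ) < n := by positivity
  refine ⟨⟨?_, ?_, fun a => ⟨by positivity, ?_⟩, fun a b hab => ?_⟩, ?_⟩
  · simp [hg.map_zero]
  · simp [hg.map_one, hn'.ne']
  · exact (div_le_one hn').2 (by exact_mod_cast hg.map_le a)
  · simp only [hg.map_add a b hab, Nat.cast_add, add_div]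
  · ext x
    constructor
    · rintro ⟨a, rfl⟩
      exact ⟨g a, hg.map_le a, rfl⟩
    · rintro ⟨i, hi, rfl⟩
      obtain ⟨a, rfl⟩ := hg.surj i hi
      exact ⟨a, rfl⟩

end IsNGrading

variable {P} {n : ℕ}

lemma IsDiscreteState.exists_isNGrading {s : E → ℝ} (hn : n ≠ 0)
    (hs : P.IsDiscreteState n s) : ∃ g, P.IsNGrading n g := by
  obtain ⟨⟨-, hs_one, -, hs_add⟩, hrange⟩ := hs
  have hvalue (a : E) : ∃ i : ℕ, s a = i / n := by
    obtain ⟨i, -, hi⟩ := hrange.subset ⟨a, rfl⟩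
    exact ⟨i, hi⟩
  choose g hg using hvalue
  refine ⟨g, ⟨?_, fun a b hab => ?_, fun i hi => ?_⟩⟩
  · rw [← natCast_div_natCast_inj hn, ← hg, hs_one, div_self (Nat.cast_ne_zero.mpr hn)]
  · rw [← natCast_div_natCast_inj hn, ← hg, hs_add a b hab, hg, hg, Nat.cast_add, add_div]
  · obtain ⟨a, ha⟩ := hrange.superset ⟨i, hi, rfl⟩
    exact ⟨a, (natCast_div_natCast_inj hn).1 ((hg a).symm.trans ha)⟩

lemma IsNDecomp.existsUnique_mem {F : ℕ → Set E} (hF : P.IsNDecomp n F) (a : E) :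
    ∃! i, i ≤ n ∧ a ∈ F i := by
  obtain ⟨-, hdisj, hunion, -, -⟩ := hF
  obtain ⟨i, hi, ha⟩ := Set.mem_iUnion₂.1 (hunion.symm ▸ Set.mem_univ a)
  refine ⟨i, ⟨hi, ha⟩, fun j ⟨hj, hja⟩ => ?_⟩
  by_contra hji
  exact (hdisj j i hj hi hji).subset ⟨hja, ha⟩

lemma IsNDecomp.exists_isNGrading {F : ℕ → Set E} (hF : P.IsNDecomp n F) :
    ∃ g, P.IsNGrading n g := by
  choose g hg_le hg_mem using fun a => (hF.existsUnique_mem a).exists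
  have hg (a : E) {i : ℕ} (hi : i ≤ n) (ha : a ∈ F i) : g a = i :=
    (hF.existsUnique_mem a).unique ⟨hg_le a, hg_mem a⟩ ⟨hi, ha⟩
  obtain ⟨hne, -, -, hcompl, hsum⟩ := hF
  have hg_add (a b : E) (hab : P.D a b) : g (P.add a b) = g a + g b :=
    have h := hsum _ _ (hg_le a) (hg_le b) a (hg_mem a) b (hg_mem b) hab
    hg _ h.1 h.2
  have hg_zero := P.map_zero_of_map_add hg_add
  refine ⟨g, ⟨?_, hg_add, fun i hi => (hne i hi).imp fun a ha => hg a hi ha⟩⟩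
  have hzero : P.zero ∈ F (n - g P.one) := by
    rw [← (hcompl _ (hg_le P.one)).1, ← P.lneg_one]
    exact Set.mem_image_of_mem _ (hg_mem P.one)
  have := hg _ (Nat.sub_le n _) hzero
  have := hg_le P.one
  omega

theorem exists_isDiscreteState_iff_exists_isNGrading (hn : n ≠ 0) :
    (∃ s, P.IsDiscreteState n s) ↔ ∃ g, P.IsNGrading n g :=
  ⟨fun ⟨_, hs⟩ => hs.exists_isNGrading hn,
    fun ⟨_, hg⟩ => ⟨_, hg.isDiscreteState hn⟩⟩

theorem exists_isNDecomp_iff_exists_isNGrading :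
    (∃ F, P.IsNDecomp n F) ↔ ∃ g, P.IsNGrading n g :=
  ⟨fun ⟨_, hF⟩ => hF.exists_isNGrading, fun ⟨_, hg⟩ => ⟨_, hg.isNDecomp⟩⟩

end PEA

/-- a PEA admits an `(n+1)`-valued discrete state iff it has an
`n`-decomposition. -/
theorem stmt6 {E : Type} (P : PEA E) (n : ℕ) (hn : 1 ≤ n) :
    (∃ s : E → ℝ, P.IsDiscreteState n s) ↔ ∃ F : ℕ → Set E, P.IsNDecomp n F :=
  (P.exists_isDiscreteState_iff_exists_isNGrading (by omega)).trans
    P.exists_isNDecomp_iff_exists_isNGrading.symm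
end

section
/- Let (E₀,...,Eₙ) be an n-decomposition of a pseudo-effect algebra E. Then E₀ is a normal ideal of E. Moreover E₀ = Ker(s), where s is the associated (n+1)-valued discrete state. -/
/-!
Every element `x` lies in exactly one slice `E_{ind x}`, and on existing sums the index is
additive: `x ∈ Eᵢ`, `y ∈ Eⱼ` give `x + y ∈ E_{i+j}`. Hence a summand of an element of `E₀` has index `0`,
and `a + i = j + a` forces `ind a + ind i = ind j + ind a`, i.e. `ind i = ind j`.
Since `s = ind / n`, the kernel of `s` is exactly the set of elements of index `0`.
-/

namespace PEA.IsNDecomp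

variable {E : Type} {P : PEA E} {n : ℕ} {F : ℕ → Set E}

theorem exists_mem (hF : P.IsNDecomp n F) (x : E) : ∃ i ≤ n, x ∈ F i := by
  have hx : x ∈ ⋃ i ∈ Set.Iic n, F i := by rw [hF.2.2.1]; trivial
  simpa using hx

theorem eq_of_mem (hF : P.IsNDecomp n F) {i j : ℕ} (hi : i ≤ n) (hj : j ≤ n) {x : E}
    (hxi : x ∈ F i) (hxj : x ∈ F j) : i = j := by
  by_contra hij
  have hx : x ∈ F i ∩ F j := ⟨hxi, hxj⟩
  rwa [hF.2.1 i j hi hj hij] at hx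

theorem mem_zero_iff (hF : P.IsNDecomp n F) {p : ℕ} (hp : p ≤ n) {x : E} (hx : x ∈ F p) :
    x ∈ F 0 ↔ p = 0 :=
  ⟨fun h => hF.eq_of_mem hp n.zero_le hx h, by rintro rfl; exact hx⟩

theorem eq_add_of_add_mem (hF : P.IsNDecomp n F) {i j k : ℕ} (hi : i ≤ n) (hj : j ≤ n)
    (hk : k ≤ n) {x y : E} (hx : x ∈ F i) (hy : y ∈ F j) (hxy : P.D x y)
    (h : P.add x y ∈ F k) : k = i + j := by
  obtain ⟨hij, hmem⟩ := hF.2.2.2.2 i j hi hj x hx y hy hxy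
  exact hF.eq_of_mem hk hij h hmem

theorem isIdeal_zero (hF : P.IsNDecomp n F) : P.IsIdeal (F 0) := by
  refine ⟨hF.1 0 n.zero_le, ?_, fun i j hi hj hij =>
    (hF.2.2.2.2 0 0 n.zero_le n.zero_le i hi j hj hij).2⟩
  rintro a b hb ⟨c, hac, rfl⟩
  obtain ⟨k, hk, hak⟩ := hF.exists_mem a
  obtain ⟨l, hl, hcl⟩ := hF.exists_mem c
  have hkl : 0 = k + l := hF.eq_add_of_add_mem hk hl n.zero_le hak hcl hac hb
  exact (hF.mem_zero_iff hk hak).2 (by omega)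

theorem isNormalIdeal_zero (hF : P.IsNDecomp n F) : P.IsNormalIdeal (F 0) := by
  refine ⟨hF.isIdeal_zero, fun a i j hai hja hij => ?_⟩
  obtain ⟨k, hk, hak⟩ := hF.exists_mem a
  obtain ⟨p, hp, hip⟩ := hF.exists_mem i
  obtain ⟨q, hq, hjq⟩ := hF.exists_mem j
  obtain ⟨hkp, hai_mem⟩ := hF.2.2.2.2 k p hk hp a hak i hip hai
  have hkpq : k + p = q + k :=
    hF.eq_add_of_add_mem hq hk hkp hjq hak hja (hij ▸ hai_mem)
  rw [hF.mem_zero_iff hp hip, hF.mem_zero_iff hq hjq]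
  omega

theorem zero_eq_ker (hF : P.IsNDecomp n F) {s : E → ℝ}
    (hs : ∀ i ≤ n, ∀ x ∈ F i, s x = (i : ℝ) / n) : F 0 = {x : E | s x = 0} := by
  ext x
  obtain ⟨i, hi, hxi⟩ := hF.exists_mem x
  rw [Set.mem_ofPred_eq, hs i hi x hxi, hF.mem_zero_iff hi hxi, div_eq_zero_iff]
  constructor
  · rintro rfl
    exact Or.inl Nat.cast_zero
  · rintro (h | h)
    · exact_mod_cast h
    · -- `i / 0 = 0` in `ℝ`, but then `i ≤ n = 0` anyway
      norm_cast at h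
      omega

end PEA.IsNDecomp

theorem stmt8_general {E : Type} (P : PEA E) (n : ℕ) (F : ℕ → Set E)
    (hF : P.IsNDecomp n F) :
    P.IsNormalIdeal (F 0) ∧
      ∀ s : E → ℝ, P.IsDiscreteState n s →
        (∀ i ≤ n, ∀ x ∈ F i, s x = (i : ℝ) / n) →
        F 0 = {x : E | s x = 0} :=
  ⟨hF.isNormalIdeal_zero, fun _ _ hs => hF.zero_eq_ker hs⟩

/-- the bottom slice `E₀` of an `n`-decomposition is a normal
ideal; moreover `E₀ = Ker(s)` for the associated `(n+1)`-valued discrete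
state. -/
theorem stmt8 {E : Type} (P : PEA E) (n : ℕ) (hn : 1 ≤ n) (F : ℕ → Set E)
    (hF : P.IsNDecomp n F) :
    P.IsNormalIdeal (F 0) ∧
      ∀ s : E → ℝ, P.IsDiscreteState n s →
        (∀ i ≤ n, ∀ x ∈ F i, s x = (i : ℝ) / n) →
        F 0 = {x : E | s x = 0} :=
  stmt8_general P n F hF
end
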